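/- arXiv:1601.02270 — 8 statements merged into one kernel-verified Lean document; each statement's English description precedes it below -/
import Mathlib

section
/- In a proper *-ring A (i.e. a^*a = 0 implies a = 0) in which the set A_Σ of finite sums of elements a^*a satisfies A_Σ ∩ (−A_Σ) = {0}, the additive group (A,+) is torsion-free: if n·a = 0 for some positive integer n, then a = 0. -/
open Pointwise

/-- Finite sums of elements of the form `star a * a`. -/
def sSums (A : Type*) [Ring A] [StarRing A] : Set A :=
  (AddSubmonoid.closure {x : A | ∃ a : A, x = star a * a} : Set A)

/-- The *-positive elements. -/
def pos (A : Type*) [Ring A] [StarRing A] : Set A :=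
  {a : A | ∃ n : ℕ, 0 < n ∧ n • a ∈ sSums A}

/-- The *-accretive elements. -/
def accr (A : Type*) [Ring A] [StarRing A] : Set A :=
  {a : A | a + star a ∈ pos A}

/-- The order `a ⪯ b ⟺ b - a ∈ 𝔯`. -/
def ple {A : Type*} [Ring A] [StarRing A] (a b : A) : Prop := b - a ∈ accr A

/-- The cone `𝔠`. -/
def cone (A : Type*) [Ring A] [StarRing A] : Set A :=
  {a : A | ∃ n : ℕ, 0 < n ∧ ple (star a * a) (n • a)}

/-- The ball `𝔅`. -/
def ball (A : Type*) [Ring A] [StarRing A] : Set A :=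
  {a : A | ple (star a * a) 1}

theorem stmt0 {A : Type*} [Ring A] [StarRing A]
    (proper : ∀ a : A, star a * a = 0 → a = 0)
    (salient : sSums A ∩ (-sSums A) = {0}) :
    ∀ (a : A) (n : ℕ), 0 < n → n • a = 0 → a = 0 := by
  intro a n hn hna
  apply proper
  have hb : star a * a ∈ sSums A := AddSubmonoid.subset_closure ⟨a, rfl⟩
  have hnb : n • (star a * a) = 0 := by
    rw [← mul_smul_comm, hna, mul_zero]
  obtain ⟨m, rfl⟩ : ∃ m, n = m + 1 := ⟨n - 1, by omega⟩
  have hneg : -(star a * a) = m • (star a * a) := by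
    apply neg_eq_of_add_eq_zero_left
    rw [← succ_nsmul]; exact hnb
  have hbneg : star a * a ∈ -sSums A := by
    rw [Set.mem_neg, hneg]
    exact nsmul_mem hb m
  have : star a * a ∈ sSums A ∩ (-sSums A) := ⟨hb, hbneg⟩
  rw [salient] at this
  exact this
end

section
/- In a proper unital *-ring A with A_Σ salient, define the ball 𝔅 = {a : a^*a ⪯ 1} where a ⪯ b means b−a ∈ 𝔯. Then 𝔅 is closed under multiplication and under the involution: 𝔅𝔅 ⊆ 𝔅 and 𝔅^* = 𝔅. -/
open Pointwise

/-!
Both closure properties come from identities exhibiting the defect `1 - x⋆x` as a sum of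
*-positive terms:
`1 - (ab)⋆(ab) = (1 - b⋆b) + b⋆(1 - a⋆a)b` and `1 - aa⋆ = (1 - aa⋆)⋆(1 - aa⋆) + a(1 - a⋆a)a⋆`.
Positivity is preserved by sums and by congruences `x ↦ b⋆xb`, and on self-adjoint elements
it coincides with accretivity, which is what membership in `𝔅` asks of `1 - a⋆a`.
-/

section

variable {A : Type*} [Ring A] [StarRing A]

lemma star_mul_self_mem_sSums (a : A) : star a * a ∈ sSums A :=
  AddSubmonoid.subset_closure ⟨a, rfl⟩

lemma star_mul_mul_mem_sSums {x : A} (hx : x ∈ sSums A) (b : A) :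
    star b * x * b ∈ sSums A := by
  induction hx using AddSubmonoid.closure_induction with
  | mem x hx =>
    obtain ⟨c, rfl⟩ := hx
    simpa only [star_mul, mul_assoc] using star_mul_self_mem_sSums (c * b)
  | zero =>
    rw [mul_zero, zero_mul]
    exact (AddSubmonoid.closure _).zero_mem
  | add x y _ _ hx hy =>
    rw [mul_add, add_mul]
    exact (AddSubmonoid.closure _).add_mem hx hy

lemma sSums_subset_pos : sSums A ⊆ pos A :=
  fun x hx => ⟨1, one_pos, by rwa [one_smul]⟩

lemma add_mem_pos {x y : A} (hx : x ∈ pos A) (hy : y ∈ pos A) : x + y ∈ pos A := by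
  obtain ⟨n, hn, hnx⟩ := hx
  obtain ⟨m, hm, hmy⟩ := hy
  refine ⟨n * m, Nat.mul_pos hn hm, ?_⟩
  have h : (n * m) • (x + y) = m • (n • x) + n • (m • y) := by
    rw [smul_add, smul_smul, smul_smul, mul_comm m n]
  rw [h]
  exact (AddSubmonoid.closure _).add_mem
    ((AddSubmonoid.closure _).nsmul_mem hnx m) ((AddSubmonoid.closure _).nsmul_mem hmy n)

lemma star_mul_mul_mem_pos {x : A} (hx : x ∈ pos A) (b : A) : star b * x * b ∈ pos A := by
  obtain ⟨n, hn, hnx⟩ := hx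
  refine ⟨n, hn, ?_⟩
  rw [← smul_mul_assoc, ← mul_smul_comm]
  exact star_mul_mul_mem_sSums hnx b

lemma IsSelfAdjoint.mem_accr_iff {x : A} (hx : IsSelfAdjoint x) : x ∈ accr A ↔ x ∈ pos A := by
  change x + star x ∈ pos A ↔ x ∈ pos A
  rw [hx.star_eq]
  refine ⟨fun ⟨n, hn, hnx⟩ => ⟨2 * n, by omega, ?_⟩, fun h => add_mem_pos h h⟩
  rwa [mul_comm, mul_smul, two_smul]

lemma mem_ball_iff {a : A} : a ∈ ball A ↔ 1 - star a * a ∈ pos A :=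
  ((IsSelfAdjoint.one A).sub (IsSelfAdjoint.star_mul_self a)).mem_accr_iff

lemma mul_mem_ball {a b : A} (ha : a ∈ ball A) (hb : b ∈ ball A) : a * b ∈ ball A := by
  rw [mem_ball_iff] at *
  have h : 1 - star (a * b) * (a * b) = (1 - star b * b) + star b * (1 - star a * a) * b := by
    rw [star_mul]; noncomm_ring
  rw [h]
  exact add_mem_pos hb (star_mul_mul_mem_pos ha b)

lemma star_mem_ball {a : A} (ha : a ∈ ball A) : star a ∈ ball A := by
  rw [mem_ball_iff] at *
  have h : 1 - star (star a) * star a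
      = star (1 - a * star a) * (1 - a * star a) + star (star a) * (1 - star a * a) * star a := by
    simp only [star_star, star_sub, star_one, star_mul]; noncomm_ring
  rw [h]
  exact add_mem_pos (sSums_subset_pos (star_mul_self_mem_sSums _)) (star_mul_mul_mem_pos ha _)

end

theorem stmt5_general {A : Type*} [Ring A] [StarRing A] :
    (∀ a ∈ ball A, ∀ b ∈ ball A, a * b ∈ ball A) ∧ star '' ball A = ball A := by
  refine ⟨fun a ha b hb => mul_mem_ball ha hb, ?_⟩
  rw [Set.image_star]
  exact Set.ext fun a => ⟨fun h => star_star a ▸ star_mem_ball h, star_mem_ball⟩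

theorem stmt5 {A : Type*} [Ring A] [StarRing A]
    (proper : ∀ a : A, star a * a = 0 → a = 0)
    (salient : sSums A ∩ (-sSums A) = {0}) :
    (∀ a ∈ ball A, ∀ b ∈ ball A, a * b ∈ ball A) ∧ star '' ball A = ball A :=
  stmt5_general
end

section
/- In a proper unital *-ring A with A_Σ salient, the cone 𝔠 = {a : a^*a ⪯ n·a for some n ∈ ℕ, n ≥ 1} satisfies 𝔠 = 𝔠^*, 𝔠 + 𝔠 = 𝔠, and 𝔠 ∩ (−𝔠) = {0}. -/
open Pointwise

/-!
Write `P n a = n • (a + a⋆) - 2 • a⋆a` (`coneDefect`), so that `a ∈ 𝔠` iff `P n a ∈ A₊` for some `n > 0`.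
With `c = n - 2a` one has `2 • P n a = n² - c⋆c` and `2 • P n a⋆ = n² - cc⋆`, and
`n²(n² - cc⋆) = (n² - cc⋆)⋆(n² - cc⋆) + c(n² - c⋆c)c⋆` shows that `𝔠` is closed under `⋆`.
Closure under addition comes from
`2 P (2(m + n)) (a + b) = 2 P m a + 2 P n b + 2n(a + a⋆) + 2m(b + b⋆) + 2(a - b)⋆(a - b)`.
Finally, if `a, -a ∈ 𝔠` then `n P m a + m P n (-a) = -2(m + n) a⋆a`, so `-a⋆a ∈ A₊`;
salience forces `a⋆a = 0` and properness `a = 0`.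
-/

section

variable {A : Type*} [Ring A] [StarRing A]

lemma add_mem_sSums {x y : A} (hx : x ∈ sSums A) (hy : y ∈ sSums A) : x + y ∈ sSums A :=
  add_mem hx hy

lemma nsmul_mem_sSums {x : A} (n : ℕ) (hx : x ∈ sSums A) : n • x ∈ sSums A :=
  nsmul_mem hx n

lemma conj_mem_sSums {x : A} (hx : x ∈ sSums A) (b : A) : b * x * star b ∈ sSums A := by
  induction hx using AddSubmonoid.closure_induction with
  | mem y hy =>
    obtain ⟨a, rfl⟩ := hy
    have h : b * (star a * a) * star b = star (a * star b) * (a * star b) := by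
      simp only [star_mul, star_star, mul_assoc]
    exact h ▸ star_mul_self_mem_sSums _
  | zero =>
    rw [mul_zero, zero_mul]
    exact (AddSubmonoid.closure _).zero_mem
  | add y z _ _ hy hz => simpa only [mul_add, add_mul] using add_mem_sSums hy hz

lemma mem_pos_of_mem_sSums {x : A} (hx : x ∈ sSums A) : x ∈ pos A :=
  ⟨1, one_pos, by simpa using hx⟩

lemma star_mul_self_mem_pos (a : A) : star a * a ∈ pos A :=
  mem_pos_of_mem_sSums (star_mul_self_mem_sSums a)

lemma nsmul_mem_pos {x : A} (n : ℕ) (hx : x ∈ pos A) : n • x ∈ pos A := by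
  obtain ⟨k, hk, hkx⟩ := hx
  exact ⟨k, hk, smul_comm k n x ▸ nsmul_mem_sSums n hkx⟩

lemma mem_pos_of_nsmul_mem {x : A} {n : ℕ} (hn : 0 < n) (hx : n • x ∈ pos A) : x ∈ pos A := by
  obtain ⟨k, hk, hkx⟩ := hx
  exact ⟨k * n, Nat.mul_pos hk hn, by rwa [mul_smul]⟩

lemma conj_mem_pos {x : A} (hx : x ∈ pos A) (b : A) : b * x * star b ∈ pos A := by
  obtain ⟨k, hk, hkx⟩ := hx
  refine ⟨k, hk, ?_⟩
  rw [← smul_mul_assoc, ← mul_smul_comm]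
  exact conj_mem_sSums hkx b

lemma eq_zero_of_mem_sSums_of_neg_mem_pos (salient : sSums A ∩ (-sSums A) = {0}) {y : A}
    (hy : y ∈ sSums A) (hy' : -y ∈ pos A) : y = 0 := by
  obtain ⟨k, hk, hky⟩ := hy'
  obtain ⟨j, rfl⟩ : ∃ j, k = j + 1 := ⟨k - 1, by omega⟩
  have hneg : -y ∈ sSums A := by
    have h : j • y + (j + 1) • -y = -y := by module
    exact h ▸ add_mem_sSums (nsmul_mem_sSums j hy) hky
  have h : y ∈ sSums A ∩ (-sSums A) := ⟨hy, by simpa using hneg⟩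
  rwa [salient] at h

lemma natCast_sub_mul_star_mem_pos {m : ℕ} (hm : 0 < m) {c : A}
    (h : (m : A) - star c * c ∈ pos A) : (m : A) - c * star c ∈ pos A := by
  refine mem_pos_of_nsmul_mem hm ?_
  have key : m • ((m : A) - c * star c) =
      star ((m : A) - c * star c) * ((m : A) - c * star c) + c * ((m : A) - star c * c) * star c := by
    have hcomm : c * (m : A) * star c = c * star c * m := by
      rw [mul_assoc, (Nat.cast_commute m (star c)).eq, mul_assoc]
    simp only [star_sub, star_mul, star_star, star_natCast, nsmul_eq_mul, mul_sub, sub_mul, hcomm,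
      (Nat.cast_commute m (c * star c)).eq]
    noncomm_ring
  rw [key]
  exact add_mem_pos (star_mul_self_mem_pos _) (conj_mem_pos h c)

def coneDefect (n : ℕ) (a : A) : A := n • (a + star a) - 2 • (star a * a)

lemma mem_cone_iff {a : A} : a ∈ cone A ↔ ∃ n : ℕ, 0 < n ∧ coneDefect n a ∈ pos A := by
  refine exists_congr fun n => and_congr_right fun _ => ?_
  have h : (n • a - star a * a) + star (n • a - star a * a) =
      n • (a + star a) - 2 • (star a * a) := by
    simp only [star_sub, star_nsmul, star_mul, star_star]
    module
  exact iff_of_eq (congrArg (· ∈ pos A) h)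

lemma two_nsmul_coneDefect (n : ℕ) (a : A) :
    2 • coneDefect n a =
      ((n ^ 2 : ℕ) : A) - star ((n : A) - 2 • a) * ((n : A) - 2 • a) := by
  rw [coneDefect, star_sub, star_natCast, star_nsmul, Nat.cast_pow, sq]
  simp only [sub_mul, mul_sub, smul_mul_assoc, mul_smul_comm, ← nsmul_eq_mul, ← nsmul_eq_mul']
  module

lemma mem_cone_iff_natCast_sq_sub_mem_pos {a : A} :
    a ∈ cone A ↔
      ∃ n : ℕ, 0 < n ∧ ((n ^ 2 : ℕ) : A) - star ((n : A) - 2 • a) * ((n : A) - 2 • a) ∈ pos A := by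
  refine mem_cone_iff.trans (exists_congr fun n => and_congr_right fun _ => ?_)
  rw [← two_nsmul_coneDefect]
  exact ⟨nsmul_mem_pos 2, mem_pos_of_nsmul_mem two_pos⟩

lemma star_mem_cone {a : A} (ha : a ∈ cone A) : star a ∈ cone A := by
  obtain ⟨n, hn, h⟩ := mem_cone_iff_natCast_sq_sub_mem_pos.mp ha
  refine mem_cone_iff_natCast_sq_sub_mem_pos.mpr ⟨n, hn, ?_⟩
  have hc : (n : A) - 2 • star a = star ((n : A) - 2 • a) := by
    rw [star_sub, star_natCast, star_nsmul]
  rw [hc, star_star]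
  exact natCast_sub_mul_star_mem_pos (by positivity) h

lemma add_star_mem_pos_of_mem_cone {a : A} (ha : a ∈ cone A) : a + star a ∈ pos A := by
  obtain ⟨n, hn, h⟩ := mem_cone_iff.mp ha
  refine mem_pos_of_nsmul_mem hn ?_
  have hsum := add_mem_pos h (nsmul_mem_pos 2 (star_mul_self_mem_pos a))
  rwa [coneDefect, sub_add_cancel] at hsum

lemma add_mem_cone {a b : A} (ha : a ∈ cone A) (hb : b ∈ cone A) : a + b ∈ cone A := by
  obtain ⟨m, hm, hPa⟩ := mem_cone_iff.mp ha
  obtain ⟨n, hn, hPb⟩ := mem_cone_iff.mp hb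
  refine mem_cone_iff.mpr ⟨2 * (m + n), by omega, ?_⟩
  have h := add_mem_pos (add_mem_pos (add_mem_pos (add_mem_pos
    (nsmul_mem_pos 2 hPa) (nsmul_mem_pos 2 hPb))
    (nsmul_mem_pos (2 * n) (add_star_mem_pos_of_mem_cone ha)))
    (nsmul_mem_pos (2 * m) (add_star_mem_pos_of_mem_cone hb)))
    (nsmul_mem_pos 2 (star_mul_self_mem_pos (a - b)))
  convert h using 1
  simp only [coneDefect, star_add, star_sub, mul_add, add_mul, sub_mul, mul_sub]
  module

lemma zero_mem_cone : (0 : A) ∈ cone A :=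
  mem_cone_iff.mpr ⟨1, one_pos, by simpa [coneDefect] using star_mul_self_mem_pos (0 : A)⟩

lemma eq_zero_of_mem_cone_of_neg_mem_cone (proper : ∀ a : A, star a * a = 0 → a = 0)
    (salient : sSums A ∩ (-sSums A) = {0}) {a : A} (ha : a ∈ cone A) (ha' : -a ∈ cone A) :
    a = 0 := by
  obtain ⟨m, hm, hPa⟩ := mem_cone_iff.mp ha
  obtain ⟨n, hn, hPa'⟩ := mem_cone_iff.mp ha'
  have h : (2 * (m + n)) • -(star a * a) ∈ pos A := by
    convert add_mem_pos (nsmul_mem_pos n hPa) (nsmul_mem_pos m hPa') using 1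
    simp only [coneDefect, star_neg, neg_mul, mul_neg, neg_neg]
    module
  refine proper a (eq_zero_of_mem_sSums_of_neg_mem_pos salient (star_mul_self_mem_sSums a) ?_)
  exact mem_pos_of_nsmul_mem (by omega) h

end

theorem stmt6 {A : Type*} [Ring A] [StarRing A]
    (proper : ∀ a : A, star a * a = 0 → a = 0)
    (salient : sSums A ∩ (-sSums A) = {0}) :
    star '' cone A = cone A ∧ cone A + cone A = cone A ∧
      cone A ∩ (-cone A) = {0} := by
  refine ⟨?_, ?_, ?_⟩
  · rw [Set.image_star]
    exact Set.ext fun a => ⟨fun h => star_star a ▸ star_mem_cone h, star_mem_cone⟩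
  · exact (Set.add_subset_iff.mpr fun a ha b hb => add_mem_cone ha hb).antisymm
      (Set.subset_add_left _ zero_mem_cone)
  · refine Set.eq_singleton_iff_unique_mem.mpr ⟨⟨zero_mem_cone, by simpa using zero_mem_cone⟩, ?_⟩
    rintro a ⟨ha, ha'⟩
    exact eq_zero_of_mem_cone_of_neg_mem_cone proper salient ha ha'
end

section
/- In a proper unital *-ring A with A_Σ salient, every element of the cone 𝔠 that is also skew-adjoint is zero: 𝔠 ∩ A_sk = {0}. -/
open Pointwise

lemma sSums_gen {A : Type*} [Ring A] [StarRing A] (a : A) : star a * a ∈ sSums A :=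
  AddSubmonoid.subset_closure ⟨a, rfl⟩

lemma sSums_nsmul {A : Type*} [Ring A] [StarRing A] {x : A} (h : x ∈ sSums A) (k : ℕ) :
    k • x ∈ sSums A :=
  AddSubmonoid.nsmul_mem _ h k

lemma sSums_zero {A : Type*} [Ring A] [StarRing A] : (0 : A) ∈ sSums A :=
  (AddSubmonoid.closure _).zero_mem

theorem stmt7 {A : Type*} [Ring A] [StarRing A]
    (proper : ∀ a : A, star a * a = 0 → a = 0)
    (salient : sSums A ∩ (-sSums A) = {0}) :
    cone A ∩ {a : A | star a = -a} = {0} := by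
  ext a
  simp only [Set.mem_inter_iff, Set.mem_setOf_eq, Set.mem_singleton_iff]
  constructor
  · rintro ⟨⟨n, hn, hple⟩, hsk⟩
    set x := star a * a with hx
    have hxstar : star x = x := by rw [hx, star_mul, star_star]
    have hstar : star (n • a - x) = n • (-a) - x := by
      rw [star_sub, star_nsmul, hsk, hxstar]
    have key : (n • a - x) + star (n • a - x) = -(2 • x) := by
      rw [hstar]
      have h0 : n • a + n • (-a) = 0 := by rw [← smul_add, add_neg_cancel, smul_zero]
      calc (n • a - x) + (n • (-a) - x) = (n • a + n • (-a)) - (x + x) := by abel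
        _ = -(2 • x) := by rw [h0, zero_sub, two_smul]
    obtain ⟨m, hm, hmem⟩ := hple
    rw [key, smul_neg, ← mul_smul] at hmem
    have hxS : x ∈ sSums A := sSums_gen a
    set k := m * 2 with hk
    have hk1 : 1 ≤ k := by omega
    have hkx : k • x ∈ sSums A := sSums_nsmul hxS k
    have hzero : k • x = 0 := by
      have : k • x ∈ sSums A ∩ (-sSums A) :=
        ⟨hkx, Set.mem_neg.mpr (by simpa using hmem)⟩
      rwa [salient, Set.mem_singleton_iff] at this
    have hnegx : -x ∈ sSums A := by
      have h1 : (k - 1) • x ∈ sSums A := sSums_nsmul hxS _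
      have h2 : (k - 1) • x + x = 0 := by
        rw [← succ_nsmul, show k - 1 + 1 = k from by omega, hzero]
      rwa [eq_neg_of_add_eq_zero_left h2] at h1
    have hx0 : x = 0 := by
      have : x ∈ sSums A ∩ (-sSums A) := ⟨hxS, Set.mem_neg.mpr (by simpa using hnegx)⟩
      rwa [salient, Set.mem_singleton_iff] at this
    exact proper a hx0
  · rintro rfl
    refine ⟨⟨1, one_pos, ?_⟩, by simp⟩
    refine ⟨1, one_pos, ?_⟩
    simpa using sSums_zero (A := A)
end

section
/- In a proper unital *-ring A with A_Σ salient: if a ∈ A_+ and b ∈ A satisfy b^*ab = 0, then ab = 0. -/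
open Pointwise

theorem stmt9 {A : Type*} [Ring A] [StarRing A]
    (proper : ∀ a : A, star a * a = 0 → a = 0)
    (salient : sSums A ∩ (-sSums A) = {0})
    (a b : A) (ha : a ∈ pos A) (h : star b * a * b = 0) :
    a * b = 0 := by
  -- salience in usable form
  have sal : ∀ u v : A, u ∈ sSums A → v ∈ sSums A → u + v = 0 → u = 0 := by
    intro u v hu hv huv
    have h1 : u ∈ sSums A ∩ (-sSums A) := by
      refine ⟨hu, ?_⟩
      rw [Set.mem_neg]
      have : -u = v := neg_eq_of_add_eq_zero_right huv
      rw [this]; exact hv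
    rw [salient] at h1
    exact h1
  obtain ⟨n, hn, hna⟩ := ha
  -- key induction: for s ∈ sSums A, star b * s * b ∈ sSums A, and if it is 0 then s * b = 0
  have key : ∀ s ∈ sSums A,
      star b * s * b ∈ sSums A ∧ (star b * s * b = 0 → s * b = 0) := by
    intro s hs
    refine AddSubmonoid.closure_induction ?_ ?_ ?_ hs
    · rintro x ⟨c, rfl⟩
      constructor
      · have : star b * (star c * c) * b = star (c * b) * (c * b) := by
          simp [mul_assoc]
        rw [this]
        exact AddSubmonoid.subset_closure ⟨c * b, rfl⟩
      · intro h0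
        have : star (c * b) * (c * b) = 0 := by
          rw [← h0]; simp [mul_assoc]
        have hcb : c * b = 0 := proper _ this
        calc star c * c * b = star c * (c * b) := by rw [mul_assoc]
          _ = 0 := by rw [hcb, mul_zero]
    · simp
      exact AddSubmonoid.zero_mem _
    · rintro s t hs ht ⟨hs1, hs2⟩ ⟨ht1, ht2⟩
      have hsplit : star b * (s + t) * b = star b * s * b + star b * t * b := by noncomm_ring
      refine ⟨by rw [hsplit]; exact add_mem hs1 ht1, ?_⟩
      intro h0
      rw [hsplit] at h0
      have hu : star b * s * b = 0 := sal _ _ hs1 ht1 h0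
      have hv : star b * t * b = 0 := by rwa [hu, zero_add] at h0
      have := hs2 hu
      have := ht2 hv
      calc (s + t) * b = s * b + t * b := add_mul s t b
        _ = 0 := by rw [hs2 hu, ht2 hv, add_zero]
  have hkey := key _ hna
  have h0 : star b * (n • a) * b = 0 := by
    have : star b * (n • a) * b = n • (star b * a * b) := by
      rw [mul_smul_comm, smul_mul_assoc]
    rw [this, h, smul_zero]
  have hnab : (n • a) * b = 0 := hkey.2 h0
  have hnab' : n • (a * b) = 0 := by rwa [smul_mul_assoc] at hnab
  -- torsion-freeness from salience and properness
  set c := a * b with hc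
  have hs : star c * c ∈ sSums A := AddSubmonoid.subset_closure ⟨c, rfl⟩
  have hns : (n - 1) • (star c * c) ∈ sSums A :=
    AddSubmonoid.nsmul_mem _ hs _
  have hsum : star c * c + (n - 1) • (star c * c) = 0 := by
    have hn1 : 1 + (n - 1) = n := by omega
    have : star c * c + (n - 1) • (star c * c) = n • (star c * c) := by
      nth_rewrite 1 [← one_nsmul (star c * c)]
      rw [← add_nsmul, hn1]
    rw [this, show n • (star c * c) = star c * (n • c) by
      rw [mul_smul_comm], hnab', mul_zero]
  have : star c * c = 0 := sal _ _ hs hns hsum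
  exact proper _ this
end

section
/- In a proper unital *-ring A with A_Σ salient, any normal nilpotent element is zero: if a ∈ A_n and a^n = 0 for some n ≥ 1, then a = 0. -/
open Pointwise

/-- In a proper *-ring, a self-adjoint element with `b ^ (n+1) = 0` is zero. -/
lemma selfadj_nilpotent_eq_zero {A : Type*} [Ring A] [StarRing A]
    (proper : ∀ a : A, star a * a = 0 → a = 0) :
    ∀ n : ℕ, ∀ b : A, star b = b → b ^ (n + 1) = 0 → b = 0 := by
  intro n
  induction n with
  | zero => intro b _ hb; simpa using hb
  | succ n ih =>
    intro b hsb hb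
    apply ih b hsb
    apply proper
    have hstar : star (b ^ (n + 1)) = b ^ (n + 1) := by
      rw [star_pow, hsb]
    rw [hstar, ← pow_add]
    have : b ^ (n + 1 + (n + 1)) = b ^ (n + 2) * b ^ n := by rw [← pow_add]; ring_nf
    rw [this, hb, zero_mul]

theorem stmt12 {A : Type*} [Ring A] [StarRing A]
    (proper : ∀ a : A, star a * a = 0 → a = 0)
    (salient : sSums A ∩ (-sSums A) = {0})
    (a : A) (ha : a * star a = star a * a) (n : ℕ) (hn : 1 ≤ n)
    (h : a ^ n = 0) : a = 0 := by
  apply proper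
  obtain ⟨m, rfl⟩ := Nat.exists_eq_add_of_le hn
  have hcomm : Commute (star a) a := (ha.symm : _)
  have hb : (star a * a) ^ (m + 1) = 0 := by
    rw [hcomm.mul_pow, ← star_pow, Nat.add_comm 1 m] at *
    rw [h, star_zero, zero_mul]
  exact selfadj_nilpotent_eq_zero proper m (star a * a) (by simp) hb
end

section
/- In a proper unital *-ring A with A_Σ salient: for projections p,q, the product pq is idempotent if and only if pq = qp. -/
open Pointwise

theorem stmt16 {A : Type*} [Ring A] [StarRing A]
    (proper : ∀ a : A, star a * a = 0 → a = 0)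
    (salient : sSums A ∩ (-sSums A) = {0})
    (p q : A) (hp : p * p = p) (hp' : star p = p)
    (hq : q * q = q) (hq' : star q = q) :
    (p * q) * (p * q) = p * q ↔ p * q = q * p := by
  constructor
  · intro h
    have h' : p * (q * (p * q)) = p * q := by rw [← mul_assoc]; exact h
    have ha : p * q - q * (p * q) = 0 := by
      apply proper
      have hs : star (p * q - q * (p * q)) = q * p - q * (p * q) := by
        simp [star_sub, star_mul, hp', hq', mul_assoc]
      rw [hs]
      simp only [mul_sub, sub_mul, mul_assoc]
      rw [show p * (p * q) = p * q from by rw [← mul_assoc, hp]]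
      rw [show q * (q * (p * q)) = q * (p * q) from by rw [← mul_assoc, hq]]
      rw [h']
      abel
    have hpq : p * q = q * (p * q) := by rwa [sub_eq_zero] at ha
    calc p * q = star (p * q) := by
          rw [hpq]; simp [star_mul, hp', hq', mul_assoc]
      _ = q * p := by rw [star_mul, hp', hq']
  · intro h
    rw [mul_assoc, ← mul_assoc q p q, ← h, mul_assoc, hq, ← mul_assoc, hp]
end

section
/- Every ⊆_⊥-Blackadar *-ring is proper: if A is a *-ring such that for every nonzero a ∈ A there exists a nonzero projection p with {b : ab = 0} ⊆ {b : pb = 0} (i.e. the annihilator of a is contained in the annihilator of p), then a^*a = 0 implies a = 0. -/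
theorem stmt19 {A : Type*} [hA : NonUnitalRing A] [StarRing A]
    (blackadar : ∀ a : A, a ≠ 0 →
      ∃ p : A, p ≠ 0 ∧ p * p = p ∧ star p = p ∧ ∀ b : A, a * b = 0 → p * b = 0) :
    ∀ a : A, a * star a = 0 → a = 0 := by
  intro a ha
  by_contra h
  obtain ⟨p, hp0, hpp, hps, hann⟩ := blackadar a h
  have h1 : p * star a = 0 := hann _ ha
  have h2 : a * p = 0 := by
    have := congrArg star h1
    simpa [star_mul, hps] using this
  have h3 : p * p = 0 := hann _ h2
  exact hp0 (by rw [← hpp, h3])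
end
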